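/- arXiv:2001.00696 — 2 statements merged into one kernel-verified Lean document; each statement's English description precedes it below -/
import Mathlib

section
/- A Banach space X is HLUR if and only if X is strongly locally U-convex and satisfies the property (HS). -/
open Metric Filter Topology NormedSpace

noncomputable section

/-- The face `S(X, f, 0) = {y ∈ B_X : f(y) = 1}` determined by a functional `f`. -/
def face (X : Type*) [NormedAddCommGroup X] [NormedSpace ℝ X] (f : X →L[ℝ] ℝ) : Set X :=
  {y | ‖y‖ ≤ 1 ∧ f y = 1}

/-- Property (HS). -/
def HSProp (X : Type*) [NormedAddCommGroup X] [NormedSpace ℝ X] : Prop :=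
  ∀ f : X →L[ℝ] ℝ, ‖f‖ = 1 → (face X f).Nonempty →
    ∀ xs : ℕ → X, (∀ n, ‖xs n‖ ≤ 1) →
      Tendsto (fun n => f (xs n)) atTop (𝓝 1) →
      Tendsto (fun n => infDist (xs n) (face X f)) atTop (𝓝 0)

/-- Property (HLUR). -/
def HLUR (X : Type*) [NormedAddCommGroup X] [NormedSpace ℝ X] : Prop :=
  ∀ x : X, ‖x‖ = 1 → ∀ xs : ℕ → X, (∀ n, ‖xs n‖ = 1) →
    Tendsto (fun n => ‖xs n + x‖) atTop (𝓝 2) →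
    ∀ f : X →L[ℝ] ℝ, ‖f‖ = 1 → f x = 1 →
      Tendsto (fun n => infDist (xs n) (face X f)) atTop (𝓝 0)

/-- Local uniform rotundity. -/
def LUR (X : Type*) [NormedAddCommGroup X] [NormedSpace ℝ X] : Prop :=
  ∀ x : X, ‖x‖ = 1 → ∀ xs : ℕ → X, (∀ n, ‖xs n‖ = 1) →
    Tendsto (fun n => ‖xs n + x‖) atTop (𝓝 2) → Tendsto xs atTop (𝓝 x)

/-- Compact local uniform rotundity. -/
def CLUR (X : Type*) [NormedAddCommGroup X] [NormedSpace ℝ X] : Prop :=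
  ∀ x : X, ‖x‖ = 1 → ∀ xs : ℕ → X, (∀ n, ‖xs n‖ = 1) →
    Tendsto (fun n => ‖xs n + x‖) atTop (𝓝 2) →
    ∃ φ : ℕ → ℕ, StrictMono φ ∧ ∃ z : X, Tendsto (xs ∘ φ) atTop (𝓝 z)

/-- Local U-convexity. -/
def LocallyUConvex (X : Type*) [NormedAddCommGroup X] [NormedSpace ℝ X] : Prop :=
  ∀ x : X, ‖x‖ = 1 → ∀ xs : ℕ → X, (∀ n, ‖xs n‖ = 1) →
    Tendsto (fun n => ‖xs n + x‖) atTop (𝓝 2) →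
    ∃ f : X →L[ℝ] ℝ, ‖f‖ = 1 ∧ f x = 1 ∧ Tendsto (fun n => f (xs n)) atTop (𝓝 1)

/-- Strong local U-convexity. -/
def StronglyLocallyUConvex (X : Type*) [NormedAddCommGroup X] [NormedSpace ℝ X] : Prop :=
  ∀ x : X, ‖x‖ = 1 → ∀ xs : ℕ → X, (∀ n, ‖xs n‖ = 1) →
    Tendsto (fun n => ‖xs n + x‖) atTop (𝓝 2) →
    ∀ f : X →L[ℝ] ℝ, ‖f‖ = 1 → f x = 1 → Tendsto (fun n => f (xs n)) atTop (𝓝 1)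

/-- Rotundity (strict convexity): every face has at most one element. -/
def Rotund (X : Type*) [NormedAddCommGroup X] [NormedSpace ℝ X] : Prop :=
  ∀ f : X →L[ℝ] ℝ, ‖f‖ = 1 → (face X f).Subsingleton

/-- Near strict convexity: every face is norm-compact. -/
def NSC (X : Type*) [NormedAddCommGroup X] [NormedSpace ℝ X] : Prop :=
  ∀ f : X →L[ℝ] ℝ, ‖f‖ = 1 → IsCompact (face X f)

/-- Kadets-Klee property. -/
def KadetsKlee (X : Type*) [NormedAddCommGroup X] [NormedSpace ℝ X] : Prop :=
  ∀ (xs : ℕ → X) (x : X),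
    (∀ f : X →L[ℝ] ℝ, Tendsto (fun n => f (xs n)) atTop (𝓝 (f x))) →
    Tendsto (fun n => ‖xs n‖) atTop (𝓝 ‖x‖) → Tendsto xs atTop (𝓝 x)

/-- Alternatively convex or smooth. -/
def ACS (X : Type*) [NormedAddCommGroup X] [NormedSpace ℝ X] : Prop :=
  ∀ x y : X, ‖x‖ = 1 → ‖y‖ = 1 → ∀ f : X →L[ℝ] ℝ, ‖f‖ = 1 →
    ‖x + y‖ = 2 → f x = 1 → f y = 1

/-- Smoothness: each unit vector has a unique norming functional. -/
def SmoothSpace (X : Type*) [NormedAddCommGroup X] [NormedSpace ℝ X] : Prop :=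
  ∀ x : X, ‖x‖ = 1 → ∃! f : X →L[ℝ] ℝ, ‖f‖ = 1 ∧ f x = 1

/-- Reflexivity of a normed space. -/
def ReflexiveSpace (X : Type*) [NormedAddCommGroup X] [NormedSpace ℝ X] : Prop :=
  Function.Surjective (inclusionInDoubleDual ℝ X)

/-- Strong rotundity: reflexive, rotund and Kadets-Klee. -/
def StronglyRotund (X : Type*) [NormedAddCommGroup X] [NormedSpace ℝ X] : Prop :=
  ReflexiveSpace X ∧ Rotund X ∧ KadetsKlee X

/-!
Every functional `f` of norm at most one is `1`-Lipschitz, so `|f z - 1|` never exceeds the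
distance from `z` to the face `S(X, f, 0)`: this gives HLUR ⇒ strong local U-convexity, and
strong local U-convexity followed by (HS) gives HLUR. For HLUR ⇒ (HS), if `x ∈ S(X, f, 0)` and
`f (xₙ) → 1` with `xₙ ∈ B_X`, then `‖xₙ‖ → 1`, so the normalised `yₙ` stay close to `xₙ`, still
satisfy `f (yₙ) → 1`, and hence `‖yₙ + x‖ ≥ f (yₙ + x) → 2`; HLUR applied to `yₙ` then
transfers to `xₙ`.
-/

section

variable {X : Type*} [NormedAddCommGroup X] [NormedSpace ℝ X] {f : X →L[ℝ] ℝ}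

lemma le_norm_of_opNorm_le_one (hf : ‖f‖ ≤ 1) (z : X) : f z ≤ ‖z‖ :=
  (le_abs_self _).trans <| (f.le_opNorm z).trans <| mul_le_of_le_one_left (norm_nonneg _) hf

lemma norm_eq_one_of_mem_face (hf : ‖f‖ ≤ 1) {x : X} (hx : x ∈ face X f) : ‖x‖ = 1 :=
  le_antisymm hx.1 (hx.2 ▸ le_norm_of_opNorm_le_one hf x)

lemma abs_sub_one_le_infDist_face (hf : ‖f‖ ≤ 1) (hne : (face X f).Nonempty) (z : X) :
    |f z - 1| ≤ infDist z (face X f) := by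
  refine (le_infDist hne).2 fun y hy => ?_
  calc |f z - 1| = ‖f (z - y)‖ := by rw [map_sub, hy.2, Real.norm_eq_abs]
    _ ≤ ‖f‖ * ‖z - y‖ := f.le_opNorm _
    _ ≤ dist z y := by rw [dist_eq_norm]; exact mul_le_of_le_one_left (norm_nonneg _) hf

lemma tendsto_apply_of_tendsto_infDist_face (hf : ‖f‖ ≤ 1) (hne : (face X f).Nonempty)
    {xs : ℕ → X} (h : Tendsto (fun n => infDist (xs n) (face X f)) atTop (𝓝 0)) :
    Tendsto (fun n => f (xs n)) atTop (𝓝 1) := by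
  rw [tendsto_iff_norm_sub_tendsto_zero]
  exact squeeze_zero (fun _ => norm_nonneg _)
    (fun n => abs_sub_one_le_infDist_face hf hne (xs n)) h

lemma tendsto_norm_of_tendsto_apply (hf : ‖f‖ ≤ 1) {xs : ℕ → X} (hxs : ∀ n, ‖xs n‖ ≤ 1)
    (h : Tendsto (fun n => f (xs n)) atTop (𝓝 1)) : Tendsto (fun n => ‖xs n‖) atTop (𝓝 1) :=
  tendsto_of_tendsto_of_tendsto_of_le_of_le h tendsto_const_nhds
    (le_norm_of_opNorm_le_one hf <| xs ·) hxs

lemma tendsto_norm_add_of_tendsto_apply (hf : ‖f‖ ≤ 1) {x : X} (hx : x ∈ face X f)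
    {ys : ℕ → X} (hys : ∀ n, ‖ys n‖ ≤ 1) (h : Tendsto (fun n => f (ys n)) atTop (𝓝 1)) :
    Tendsto (fun n => ‖ys n + x‖) atTop (𝓝 2) := by
  have hlow : Tendsto (fun n => f (ys n + x)) atTop (𝓝 2) := by
    simpa only [map_add, hx.2, one_add_one_eq_two] using h.add_const 1
  refine tendsto_of_tendsto_of_tendsto_of_le_of_le hlow tendsto_const_nhds
    (le_norm_of_opNorm_le_one hf <| ys · + x) fun n => ?_
  calc ‖ys n + x‖ ≤ ‖ys n‖ + ‖x‖ := norm_add_le _ _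
    _ ≤ 1 + 1 := add_le_add (hys n) hx.1
    _ = 2 := one_add_one_eq_two

lemma norm_normalize_sub_le (v : X) : ‖NormedSpace.normalize v - v‖ ≤ |1 - ‖v‖| := by
  rcases eq_or_ne v 0 with rfl | hv
  · simp
  have hpos : 0 < ‖v‖ := norm_pos_iff.2 hv
  refine le_of_eq ?_
  calc ‖NormedSpace.normalize v - v‖ = ‖(‖v‖⁻¹ - 1) • v‖ := by
        rw [NormedSpace.normalize, sub_smul, one_smul]
    _ = |1 - ‖v‖| := by
        rw [norm_smul, Real.norm_eq_abs, ← abs_of_pos hpos, ← abs_mul, abs_of_pos hpos,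
          sub_mul, inv_mul_cancel₀ hpos.ne', one_mul, abs_sub_comm]

lemma exists_norm_eq_one_tendsto_sub {x : X} (hx : ‖x‖ = 1) {xs : ℕ → X}
    (h : Tendsto (fun n => ‖xs n‖) atTop (𝓝 1)) :
    ∃ ys : ℕ → X, (∀ n, ‖ys n‖ = 1) ∧ Tendsto (fun n => ys n - xs n) atTop (𝓝 0) := by
  classical
  refine ⟨fun n => if xs n = 0 then x else NormedSpace.normalize (xs n), fun n => ?_, ?_⟩
  · dsimp only
    split_ifs with h0
    exacts [hx, NormedSpace.norm_normalize_eq_one_iff.2 h0]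
  · have hbound : Tendsto (fun n => |1 - ‖xs n‖|) atTop (𝓝 0) := by
      simpa using ((tendsto_const_nhds (x := (1 : ℝ))).sub h).abs
    refine squeeze_zero_norm (fun n => ?_) hbound
    dsimp only
    split_ifs with h0
    · simp [h0, hx]
    · exact norm_normalize_sub_le _

end

namespace HLUR

variable {X : Type*} [NormedAddCommGroup X] [NormedSpace ℝ X]

theorem stronglyLocallyUConvex (H : HLUR X) : StronglyLocallyUConvex X :=
  fun x hx xs hxs hsum f hf hfx =>
    tendsto_apply_of_tendsto_infDist_face hf.le ⟨x, hx.le, hfx⟩ (H x hx xs hxs hsum f hf hfx)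

theorem hsProp (H : HLUR X) : HSProp X := by
  rintro f hf ⟨x, hx⟩ xs hxs hfxs
  have hxn : ‖x‖ = 1 := norm_eq_one_of_mem_face hf.le hx
  obtain ⟨ys, hys, hsub⟩ :=
    exists_norm_eq_one_tendsto_sub hxn (tendsto_norm_of_tendsto_apply hf.le hxs hfxs)
  have hfys : Tendsto (fun n => f (ys n)) atTop (𝓝 1) := by
    simpa only [Function.comp_def, map_sub, sub_add_cancel, map_zero, zero_add] using
      ((f.continuous.tendsto 0).comp hsub).add hfxs
  have hsum := tendsto_norm_add_of_tendsto_apply hf.le hx (fun n => (hys n).le) hfys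
  have hdist : Tendsto (fun n => infDist (ys n) (face X f) + ‖ys n - xs n‖) atTop (𝓝 0) := by
    simpa using (H x hxn ys hys hsum f hf hx.2).add (tendsto_norm_zero.comp hsub)
  refine squeeze_zero (fun _ => infDist_nonneg) (fun n => ?_) hdist
  rw [← dist_eq_norm, dist_comm]
  exact infDist_le_infDist_add_dist

end HLUR

theorem hlur_iff_sluc_hs_general (X : Type*) [NormedAddCommGroup X] [NormedSpace ℝ X] :
    HLUR X ↔ StronglyLocallyUConvex X ∧ HSProp X := by
  refine ⟨fun H => ⟨H.stronglyLocallyUConvex, H.hsProp⟩, ?_⟩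
  rintro ⟨hS, hHS⟩ x hx xs hxs hsum f hf hfx
  exact hHS f hf ⟨x, hx.le, hfx⟩ xs (fun n => (hxs n).le) (hS x hx xs hxs hsum f hf hfx)

theorem hlur_iff_sluc_hs (X : Type*) [NormedAddCommGroup X] [NormedSpace ℝ X]
    [CompleteSpace X] :
    HLUR X ↔ StronglyLocallyUConvex X ∧ HSProp X :=
  hlur_iff_sluc_hs_general X
end
end

section
/- If a Banach space X is HLUR, then X is ACS. -/
open Metric Filter Topology NormedSpace

noncomputable section

theorem isClosed_face {X : Type*} [NormedAddCommGroup X] [NormedSpace ℝ X] (f : X →L[ℝ] ℝ) :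
    IsClosed (face X f) :=
  (isClosed_le continuous_norm continuous_const).inter (isClosed_eq f.continuous continuous_const)

theorem mem_face_of_infDist_eq_zero {X : Type*} [NormedAddCommGroup X] [NormedSpace ℝ X]
    {f : X →L[ℝ] ℝ} {y : X} (hne : (face X f).Nonempty) (hy : infDist y (face X f) = 0) :
    y ∈ face X f :=
  ((isClosed_face f).mem_iff_infDist_zero hne).2 hy

theorem hlur_acs_general (X : Type*) [NormedAddCommGroup X] [NormedSpace ℝ X]
    (hX : HLUR X) : ACS X := by
  intro x y hx hy f hf hxy hfx
  have hdist : Tendsto (fun _ : ℕ => infDist y (face X f)) atTop (𝓝 0) :=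
    hX x hx (fun _ => y) (fun _ => hy) (by rw [add_comm, hxy]; exact tendsto_const_nhds) f hf hfx
  exact (mem_face_of_infDist_eq_zero ⟨x, hx.le, hfx⟩ (tendsto_nhds_unique tendsto_const_nhds hdist)).2

theorem hlur_acs (X : Type*) [NormedAddCommGroup X] [NormedSpace ℝ X]
    [CompleteSpace X] (hX : HLUR X) : ACS X :=
  hlur_acs_general X hX
end
end
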